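/- Let Y^(1),…,Y^(N) be multi-object trajectories with L = Σ_{n=1}^N |Y^(n)| ≥ 1, and let p > 0. Assume that for every j ≥ L and every n, κ(j, |Y^(n)|) = κ̄(j) depends only on j, and that κ̄(j+1) − κ̄(j) ≤ κ̄(L)/L for all j ≥ L. Then every r-th order Fréchet mean of Y^(1),…,Y^(N) has cardinality at most L: if Ŷ is a finite multiset of trajectories with Σ_{n=1}^N d(Ŷ, Y^(n))^r ≤ Σ_{n=1}^N d(X, Y^(n))^r for every finite multiset X of trajectories, then |Ŷ| ≤ L. -/

import Mathlib

/-!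
Suppose a Fréchet mean `Ŷ` had `s > L` elements. Against each `Y⁽ⁿ⁾` at least `s - |Y⁽ⁿ⁾|`
objects are unmatched, so its total cost is at least `(N s - L) pʳ / κ̄(s)`. The multiset
`Z = Σₙ Y⁽ⁿ⁾` has exactly `L` elements and contains every `Y⁽ⁿ⁾`, so matching `Y⁽ⁿ⁾` with
itself inside `Z` costs exactly `(N L - L) pʳ / κ̄(L)`. The growth condition on `κ̄` gives
`κ̄(s) ≤ κ̄(L) s / L`, and with it `Z` is strictly cheaper than `Ŷ`.
-/

/-- A trajectory on the time window `{1,…,K}` (modeled as `Fin K`): a domain together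
with a state map (values outside the domain are irrelevant). -/
structure Traj (K : ℕ) (X : Type*) where
  dom : Finset (Fin K)
  toFun : Fin K → X

/-- Per-time cost `e_{u,v}(k)` with base metric cut off at `c`. -/
noncomputable def ecost {K : ℕ} {X : Type*} [MetricSpace X] (c : ℝ) (u v : Traj K X)
    (k : Fin K) : ℝ :=
  if k ∈ u.dom ∩ v.dom then min (dist (u.toFun k) (v.toFun k)) c
  else if k ∈ u.dom ∪ v.dom then c
  else 0

/-- OSPA trajectory distance of order `r` and cut-off `c`. -/
noncomputable def dT {K : ℕ} {X : Type*} [MetricSpace X] (c r : ℝ) (u v : Traj K X) : ℝ :=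
  if u.dom ∪ v.dom = ∅ then 0
  else ((∑ k ∈ u.dom ∪ v.dom, ecost c u v k ^ r) / ((u.dom ∪ v.dom).card : ℝ)) ^ (1 / r)

/-- OSPA-based multi-object trajectory distance of order `r`, cardinality penalty `p`,
cut-off `c` and normalization `κ`.  The minimum over permutations of an enumeration of
the larger multiset is realized as the infimum, over all lists `l` of pairs whose first
components enumerate the smaller multiset and whose second components form a
sub-multiset of the larger one, of the normalized total cost. -/
noncomputable def dMOT {K : ℕ} {X : Type*} [MetricSpace X] (κ : ℕ → ℕ → ℝ)
    (p c r : ℝ) (A B : Multiset (Traj K X)) : ℝ :=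
  (sInf { q : ℝ | ∃ l : List (Traj K X × Traj K X),
      (↑(l.map Prod.fst) : Multiset (Traj K X)) = (if A.card ≤ B.card then A else B) ∧
      (↑(l.map Prod.snd) : Multiset (Traj K X)) ≤ (if A.card ≤ B.card then B else A) ∧
      q = ((l.map fun e => dT c r e.1 e.2 ^ r).sum
            + ((max A.card B.card - min A.card B.card : ℕ) : ℝ) * p ^ r)
          / κ (max A.card B.card) (min A.card B.card) }) ^ (1 / r)

open Finset

section TrajectoryDistance

variable {K : ℕ} {X : Type*} [MetricSpace X] {c r : ℝ}

lemma ecost_nonneg (hc : 0 ≤ c) (u v : Traj K X) (k : Fin K) : 0 ≤ ecost c u v k := by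
  unfold ecost
  split_ifs
  exacts [le_min dist_nonneg hc, hc, le_rfl]

lemma dT_nonneg (hc : 0 ≤ c) (u v : Traj K X) : 0 ≤ dT c r u v := by
  unfold dT
  split_ifs
  · exact le_rfl
  · exact Real.rpow_nonneg (div_nonneg
      (sum_nonneg fun k _ => Real.rpow_nonneg (ecost_nonneg hc u v k) r) (Nat.cast_nonneg _)) _

lemma dT_self (hc : 0 ≤ c) (hr : r ≠ 0) (u : Traj K X) : dT c r u u = 0 := by
  have hzero : ∀ k ∈ u.dom ∪ u.dom, ecost c u u k ^ r = 0 := fun k hk => by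
    rw [ecost, if_pos (by simpa using hk), dist_self, min_eq_left hc, Real.zero_rpow hr]
  unfold dT
  split_ifs
  · rfl
  · rw [sum_eq_zero hzero, zero_div, one_div, Real.zero_rpow (inv_ne_zero hr)]

end TrajectoryDistance

lemma Multiset.exists_list_pairing {α : Type*} {A B : Multiset α} (h : A.card ≤ B.card) :
    ∃ l : List (α × α),
      (↑(l.map Prod.fst) : Multiset α) = A ∧ (↑(l.map Prod.snd) : Multiset α) ≤ B := by
  have hlen : A.toList.length ≤ (B.toList.take A.card).length := by simpa using h
  refine ⟨A.toList.zip (B.toList.take A.card), ?_, ?_⟩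
  · rw [List.map_fst_zip hlen, Multiset.coe_toList]
  · rw [List.map_snd_zip (by simp)]
    exact (Multiset.coe_le.mpr (List.take_sublist _ _).subperm).trans_eq B.coe_toList

section MultiObjectDistance

variable {K : ℕ} {X : Type*} [MetricSpace X] {κ : ℕ → ℕ → ℝ} {p c r : ℝ}

def pairingCosts (κ : ℕ → ℕ → ℝ) (p c r : ℝ) (A B : Multiset (Traj K X)) : Set ℝ :=
  { q : ℝ | ∃ l : List (Traj K X × Traj K X),
      (↑(l.map Prod.fst) : Multiset (Traj K X)) = (if A.card ≤ B.card then A else B) ∧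
      (↑(l.map Prod.snd) : Multiset (Traj K X)) ≤ (if A.card ≤ B.card then B else A) ∧
      q = ((l.map fun e => dT c r e.1 e.2 ^ r).sum
            + ((max A.card B.card - min A.card B.card : ℕ) : ℝ) * p ^ r)
          / κ (max A.card B.card) (min A.card B.card) }

lemma pairingCosts_nonempty (A B : Multiset (Traj K X)) :
    (pairingCosts κ p c r A B).Nonempty := by
  by_cases h : A.card ≤ B.card
  · obtain ⟨l, h₁, h₂⟩ := Multiset.exists_list_pairing h
    exact ⟨_, l, by rwa [if_pos h], by rwa [if_pos h], rfl⟩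
  · obtain ⟨l, h₁, h₂⟩ := Multiset.exists_list_pairing (le_of_not_ge h)
    exact ⟨_, l, by rwa [if_neg h], by rwa [if_neg h], rfl⟩

lemma sum_dT_rpow_nonneg (hc : 0 ≤ c) (l : List (Traj K X × Traj K X)) :
    0 ≤ (l.map fun e => dT c r e.1 e.2 ^ r).sum :=
  List.sum_nonneg fun _ hx => by
    obtain ⟨e, -, rfl⟩ := List.mem_map.mp hx
    exact Real.rpow_nonneg (dT_nonneg hc _ _) r

lemma nonneg_of_mem_pairingCosts (hκ : ∀ s m, 0 < κ s m) (hc : 0 ≤ c) (hp : 0 ≤ p)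
    {A B : Multiset (Traj K X)} {q : ℝ} (hq : q ∈ pairingCosts κ p c r A B) : 0 ≤ q := by
  obtain ⟨l, -, -, rfl⟩ := hq
  exact div_nonneg (add_nonneg (sum_dT_rpow_nonneg hc l)
    (mul_nonneg (Nat.cast_nonneg _) (Real.rpow_nonneg hp r))) (hκ _ _).le

lemma dMOT_rpow (hκ : ∀ s m, 0 < κ s m) (hc : 0 ≤ c) (hp : 0 ≤ p) (hr : r ≠ 0)
    (A B : Multiset (Traj K X)) : dMOT κ p c r A B ^ r = sInf (pairingCosts κ p c r A B) := by
  rw [dMOT, one_div, ← pairingCosts]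
  exact Real.rpow_inv_rpow (Real.sInf_nonneg fun _ hq => nonneg_of_mem_pairingCosts hκ hc hp hq) hr

/-- Every pairing leaves `|A| - |B|` objects of the larger multiset unmatched. -/
lemma card_penalty_le_dMOT_rpow (hκ : ∀ s m, 0 < κ s m) (hc : 0 ≤ c) (hp : 0 ≤ p)
    (hr : r ≠ 0) {A B : Multiset (Traj K X)} (h : B.card ≤ A.card) :
    ((A.card - B.card : ℕ) : ℝ) * p ^ r / κ A.card B.card ≤ dMOT κ p c r A B ^ r := by
  rw [dMOT_rpow hκ hc hp hr]
  refine le_csInf (pairingCosts_nonempty A B) ?_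
  rintro q ⟨l, -, -, rfl⟩
  rw [max_eq_left h, min_eq_right h]
  gcongr
  · exact (hκ _ _).le
  · exact le_add_of_nonneg_left (sum_dT_rpow_nonneg hc l)

/-- A sub-multiset is matched with itself, leaving only the cardinality penalty. -/
lemma dMOT_rpow_of_le (hκ : ∀ s m, 0 < κ s m) (hc : 0 ≤ c) (hp : 0 ≤ p) (hr : r ≠ 0)
    {A B : Multiset (Traj K X)} (h : B ≤ A) :
    dMOT κ p c r A B ^ r = ((A.card - B.card : ℕ) : ℝ) * p ^ r / κ A.card B.card := by
  have hcard := Multiset.card_le_card h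
  refine le_antisymm ?_ (card_penalty_le_dMOT_rpow hκ hc hp hr hcard)
  rw [dMOT_rpow hκ hc hp hr]
  refine csInf_le ⟨0, fun _ hq => nonneg_of_mem_pairingCosts hκ hc hp hq⟩
    ⟨B.toList.map fun y => (y, y), ?_, ?_, ?_⟩
  · split_ifs with h'
    · simpa [Function.comp_def] using Multiset.eq_of_le_of_card_le h h'
    · simp [Function.comp_def]
  · split_ifs <;> simp [Function.comp_def, h]
  · simp [Function.comp_def, dT_self hc hr, Real.zero_rpow hr, max_eq_left hcard,
      min_eq_right hcard]

end MultiObjectDistance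

lemma le_add_mul_of_forall_sub_le {f : ℕ → ℝ} {a : ℕ} {d : ℝ}
    (h : ∀ j, a ≤ j → f (j + 1) - f j ≤ d) {j : ℕ} (hj : a ≤ j) :
    f j ≤ f a + ((j : ℝ) - a) * d := by
  induction j, hj using Nat.le_induction with
  | base => simp
  | succ j hj ih => push_cast; linarith [h j hj]

lemma mul_sub_div_lt_mul_sub_div {N L s kL ks P : ℝ} (hN : 1 ≤ N) (hL : 0 < L) (hLs : L < s)
    (hkL : 0 < kL) (hks : 0 < ks) (hP : 0 < P) (hgrowth : ks ≤ kL + (s - L) * (kL / L)) :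
    (N * L - L) * P / kL < (N * s - L) * P / ks := by
  replace hgrowth : ks * L ≤ kL * s :=
    calc ks * L ≤ (kL + (s - L) * (kL / L)) * L := by gcongr
      _ = kL * s := by field_simp; ring
  rw [div_lt_div_iff₀ hkL hks]
  nlinarith [mul_le_mul_of_nonneg_left hgrowth (by positivity : 0 ≤ (N - 1) * P),
    mul_pos (mul_pos hP hkL) (sub_pos.2 hLs)]

theorem frechet_mean_card_le_general {K N : ℕ} {X : Type*} [MetricSpace X]
    (hN : 1 ≤ N) {c r p : ℝ} (hc : 0 < c) (hr : 1 ≤ r) (hp : 0 < p)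
    (κ : ℕ → ℕ → ℝ) (hκpos : ∀ s m, 0 < κ s m)
    (Y : Fin N → Multiset (Traj K X)) (L : ℕ) (hL : L = ∑ n, (Y n).card) (hL1 : 1 ≤ L)
    (κbar : ℕ → ℝ)
    (hκbar : ∀ j, L ≤ j → ∀ n : Fin N, κ j (Y n).card = κbar j)
    (hκincr : ∀ j, L ≤ j → κbar (j + 1) - κbar j ≤ κbar L / (L : ℝ))
    (Yhat : Multiset (Traj K X))
    (hmin : ∀ Z : Multiset (Traj K X),
      ∑ n, dMOT κ p c r Yhat (Y n) ^ r ≤ ∑ n, dMOT κ p c r Z (Y n) ^ r) :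
    Yhat.card ≤ L := by
  by_contra! hs
  have hr0 : r ≠ 0 := by positivity
  have hYZ : ∀ n, Y n ≤ ∑ n, Y n := fun n =>
    single_le_sum (f := Y) (fun _ _ => Multiset.zero_le _) (mem_univ n)
  have hm : ∀ n, (Y n).card ≤ L := fun n =>
    hL ▸ Multiset.card_sum _ Y ▸ Multiset.card_le_card (hYZ n)
  have hκbar_pos : ∀ j, L ≤ j → 0 < κbar j := fun j hj => hκbar j hj ⟨0, hN⟩ ▸ hκpos _ _
  have hpenalty : ∀ t, L ≤ t →
      ∑ n, ((t - (Y n).card : ℕ) : ℝ) * p ^ r / κbar t = (N * t - L) * p ^ r / κbar t := by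
    intro t ht
    rw [← sum_div, ← sum_mul, sum_congr rfl fun n _ => Nat.cast_sub ((hm n).trans ht)]
    simp [sum_sub_distrib, hL]
  have hYhat : (N * Yhat.card - L) * p ^ r / κbar Yhat.card ≤
      ∑ n, dMOT κ p c r Yhat (Y n) ^ r := by
    rw [← hpenalty _ hs.le]
    refine sum_le_sum fun n _ => ?_
    rw [← hκbar _ hs.le n]
    exact card_penalty_le_dMOT_rpow hκpos hc.le hp.le hr0 ((hm n).trans hs.le)
  have hZ : ∑ n, dMOT κ p c r (∑ n, Y n) (Y n) ^ r = (N * L - L) * p ^ r / κbar L := by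
    rw [← hpenalty L le_rfl]
    refine sum_congr rfl fun n _ => ?_
    rw [dMOT_rpow_of_le hκpos hc.le hp.le hr0 (hYZ n), Multiset.card_sum, ← hL, hκbar L le_rfl n]
  refine (mul_sub_div_lt_mul_sub_div (Nat.one_le_cast.mpr hN) (Nat.cast_pos.mpr hL1)
    (Nat.cast_lt.mpr hs) (hκbar_pos L le_rfl) (hκbar_pos _ hs.le) (Real.rpow_pos_of_pos hp r)
    (le_add_mul_of_forall_sub_le hκincr hs.le)).not_ge (hZ ▸ hYhat.trans (hmin _))

/-- Cardinality bound on Fréchet means of multi-object trajectories: under the stated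
assumptions on `κ`, every `r`-th order Fréchet mean of `Y^(1),…,Y^(N)` has cardinality
at most `L = Σ_n |Y^(n)|`. -/
theorem frechet_mean_card_le {K N : ℕ} {X : Type*} [MetricSpace X]
    (hK : 1 ≤ K) (hN : 1 ≤ N) {c r p : ℝ} (hc : 0 < c) (hr : 1 ≤ r) (hp : 0 < p)
    (κ : ℕ → ℕ → ℝ) (hκpos : ∀ s m, 0 < κ s m) (hκsym : ∀ s m, κ s m = κ m s)
    (Y : Fin N → Multiset (Traj K X)) (L : ℕ) (hL : L = ∑ n, (Y n).card) (hL1 : 1 ≤ L)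
    (κbar : ℕ → ℝ)
    (hκbar : ∀ j, L ≤ j → ∀ n : Fin N, κ j (Y n).card = κbar j)
    (hκincr : ∀ j, L ≤ j → κbar (j + 1) - κbar j ≤ κbar L / (L : ℝ))
    (Yhat : Multiset (Traj K X))
    (hmin : ∀ Z : Multiset (Traj K X),
      ∑ n, dMOT κ p c r Yhat (Y n) ^ r ≤ ∑ n, dMOT κ p c r Z (Y n) ^ r) :
    Yhat.card ≤ L :=
  frechet_mean_card_le_general hN hc hr hp κ hκpos Y L hL hL1 κbar hκbar hκincr Yhat hmin
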